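/- arXiv:math/0503675 — 3 statements merged into one kernel-verified Lean document; each statement's English description precedes it below -/
import Mathlib

section
/- If f is a unimodal probability density on the real line (i.e., there exists x0 such that f is nondecreasing on (-∞, x0] and nonincreasing on [x0, ∞)), then the excess mass difference Δ₂ of f equals zero; that is, for every λ > 0, the supremum over pairs of disjoint intervals L₁, L₂ of Σᵢ{F(Lᵢ) − λ‖Lᵢ‖} equals the supremum over single intervals L of {F(L) − λ‖L‖}. -/
/-!
Write `e(a, b) = F b - F a - λ (b - a) = ∫_a^b (f - λ)` for the excess of an interval. For two
intervals `a₁ ≤ b₁ ≤ a₂ ≤ b₂`, either the gap has `e(b₁, a₂) ≥ 0`, and then merging the two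
intervals into `[a₁, b₂]` does not decrease the total excess, or `e(b₁, a₂) < 0`. In the second
case, split the gap at the mode `x₀` (clamped to the gap): one half has negative excess and lies
on a monotone side of `f`. If it is the left half, then `f b₁ < λ`, and since `f` increases up to
`b₁`, `f < λ` on `[a₁, b₁]`, so that interval can be dropped; the right half is symmetric.
-/

open MeasureTheory Set

noncomputable def excessMass (F : ℝ → ℝ) (m : ℕ) (lam : ℝ) : ℝ :=
  sSup { s : ℝ | ∃ L : Fin m → ℝ × ℝ, (∀ i, (L i).1 ≤ (L i).2) ∧
    (∀ i j, i ≠ j → Disjoint (Set.Ioc (L i).1 (L i).2) (Set.Ioc (L j).1 (L j).2)) ∧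
    s = ∑ i, (F (L i).2 - F (L i).1 - lam * ((L i).2 - (L i).1)) }

def intervalExcess (F : ℝ → ℝ) (lam a b : ℝ) : ℝ :=
  F b - F a - lam * (b - a)

lemma intervalExcess_self (F : ℝ → ℝ) (lam a : ℝ) : intervalExcess F lam a a = 0 := by
  simp [intervalExcess]

lemma intervalExcess_add_intervalExcess (F : ℝ → ℝ) (lam a b c : ℝ) :
    intervalExcess F lam a b + intervalExcess F lam b c = intervalExcess F lam a c := by
  simp only [intervalExcess]
  ring

section

variable {f F : ℝ → ℝ} {x₀ : ℝ}

lemma sub_eq_intervalIntegral (hfi : Integrable f) (hF : ∀ x, F x = ∫ t in Iic x, f t)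
    (a b : ℝ) : F b - F a = ∫ t in a..b, f t := by
  rw [hF, hF]
  exact intervalIntegral.integral_Iic_sub_Iic hfi.integrableOn hfi.integrableOn

lemma sub_le_mul_of_forall_le (hfi : Integrable f) (hF : ∀ x, F x = ∫ t in Iic x, f t)
    {a b M : ℝ} (hab : a ≤ b) (h : ∀ x ∈ Icc a b, f x ≤ M) :
    F b - F a ≤ M * (b - a) := by
  rw [sub_eq_intervalIntegral hfi hF, mul_comm, ← smul_eq_mul, ← intervalIntegral.integral_const]
  exact intervalIntegral.integral_mono_on hab hfi.intervalIntegrable intervalIntegrable_const h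

lemma mul_le_sub_of_forall_le (hfi : Integrable f) (hF : ∀ x, F x = ∫ t in Iic x, f t)
    {a b m : ℝ} (hab : a ≤ b) (h : ∀ x ∈ Icc a b, m ≤ f x) :
    m * (b - a) ≤ F b - F a := by
  rw [sub_eq_intervalIntegral hfi hF, mul_comm, ← smul_eq_mul, ← intervalIntegral.integral_const]
  exact intervalIntegral.integral_mono_on hab intervalIntegrable_const hfi.intervalIntegrable h

lemma intervalExcess_nonpos_of_monotoneOn (hfi : Integrable f)
    (hF : ∀ x, F x = ∫ t in Iic x, f t) {lam a b c : ℝ} (hmono : MonotoneOn f (Icc a c))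
    (hab : a ≤ b) (hbc : b ≤ c) (hneg : intervalExcess F lam b c < 0) :
    intervalExcess F lam a b ≤ 0 := by
  have hfb : f b < lam := by
    have hlow := mul_le_sub_of_forall_le hfi hF hbc fun x hx =>
      hmono ⟨hab, hbc⟩ ⟨hab.trans hx.1, hx.2⟩ hx.1
    unfold intervalExcess at hneg
    exact lt_of_mul_lt_mul_right (by linarith) (sub_nonneg.2 hbc)
  have hup := sub_le_mul_of_forall_le hfi hF hab fun x hx =>
    hmono ⟨hx.1, hx.2.trans hbc⟩ ⟨hab, hbc⟩ hx.2
  unfold intervalExcess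
  nlinarith [sub_nonneg.2 hab]

lemma intervalExcess_nonpos_of_antitoneOn (hfi : Integrable f)
    (hF : ∀ x, F x = ∫ t in Iic x, f t) {lam a b c : ℝ} (hanti : AntitoneOn f (Icc c b))
    (hca : c ≤ a) (hab : a ≤ b) (hneg : intervalExcess F lam c a < 0) :
    intervalExcess F lam a b ≤ 0 := by
  have hfa : f a < lam := by
    have hlow := mul_le_sub_of_forall_le hfi hF hca fun x hx =>
      hanti ⟨hx.1, hx.2.trans hab⟩ ⟨hca, hab⟩ hx.2
    unfold intervalExcess at hneg
    exact lt_of_mul_lt_mul_right (by linarith) (sub_nonneg.2 hca)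
  have hup := sub_le_mul_of_forall_le hfi hF hab fun x hx =>
    hanti ⟨hca, hab⟩ ⟨hca.trans hx.1, hx.2⟩ hx.1
  unfold intervalExcess
  nlinarith [sub_nonneg.2 hab]

lemma exists_intervalExcess_add_le_of_le (hfi : Integrable f)
    (hF : ∀ x, F x = ∫ t in Iic x, f t) (hmono : MonotoneOn f (Iic x₀))
    (hanti : AntitoneOn f (Ici x₀)) (lam : ℝ) {a₁ b₁ a₂ b₂ : ℝ}
    (h₁ : a₁ ≤ b₁) (h₁₂ : b₁ ≤ a₂) (h₂ : a₂ ≤ b₂) :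
    ∃ a b, a ≤ b ∧
      intervalExcess F lam a₁ b₁ + intervalExcess F lam a₂ b₂ ≤ intervalExcess F lam a b := by
  by_cases hgap : 0 ≤ intervalExcess F lam b₁ a₂
  · refine ⟨a₁, b₂, h₁.trans (h₁₂.trans h₂), ?_⟩
    rw [← intervalExcess_add_intervalExcess F lam a₁ a₂ b₂,
      ← intervalExcess_add_intervalExcess F lam a₁ b₁ a₂]
    linarith
  obtain ⟨c, hc⟩ : ∃ c, c = max b₁ (min x₀ a₂) := ⟨_, rfl⟩
  have hb₁c : b₁ ≤ c := by grind
  have hca₂ : c ≤ a₂ := by grind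
  rw [← intervalExcess_add_intervalExcess F lam b₁ c a₂] at hgap
  rcases lt_or_ge (intervalExcess F lam b₁ c) 0 with hleft | hleft_nonneg
  · have hcx₀ : c ≤ x₀ := by
      have : b₁ ≠ c := by rintro rfl; simp [intervalExcess_self] at hleft
      grind
    have := intervalExcess_nonpos_of_monotoneOn hfi hF
      (hmono.mono fun x hx => hx.2.trans hcx₀) h₁ hb₁c hleft
    exact ⟨a₂, b₂, h₂, by linarith⟩
  · have hx₀c : x₀ ≤ c := by
      have : c ≠ a₂ := by rintro rfl; simp [intervalExcess_self] at hgap; linarith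
      grind
    have := intervalExcess_nonpos_of_antitoneOn hfi hF
      (hanti.mono fun x hx => hx₀c.trans hx.1) hca₂ h₂ (by linarith)
    exact ⟨a₁, b₁, h₁, by linarith⟩

lemma exists_intervalExcess_add_le (hfi : Integrable f)
    (hF : ∀ x, F x = ∫ t in Iic x, f t) (hmono : MonotoneOn f (Iic x₀))
    (hanti : AntitoneOn f (Ici x₀)) (lam : ℝ) {a₁ b₁ a₂ b₂ : ℝ}
    (h₁ : a₁ ≤ b₁) (h₂ : a₂ ≤ b₂) (hdisj : Disjoint (Ioc a₁ b₁) (Ioc a₂ b₂)) :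
    ∃ a b, a ≤ b ∧
      intervalExcess F lam a₁ b₁ + intervalExcess F lam a₂ b₂ ≤ intervalExcess F lam a b := by
  rcases h₁.eq_or_lt with rfl | h₁
  · exact ⟨a₂, b₂, h₂, by simp [intervalExcess_self]⟩
  rcases h₂.eq_or_lt with rfl | h₂
  · exact ⟨a₁, b₁, h₁.le, by simp [intervalExcess_self]⟩
  have hsep : b₁ ≤ a₂ ∨ b₂ ≤ a₁ := by
    have := Ioc_disjoint_Ioc.1 hdisj
    grind
  rcases hsep with hsep | hsep
  · exact exists_intervalExcess_add_le_of_le hfi hF hmono hanti lam h₁.le hsep h₂.le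
  · rw [add_comm]
    exact exists_intervalExcess_add_le_of_le hfi hF hmono hanti lam h₂.le hsep h₁.le

end

theorem stmt0_general (f F : ℝ → ℝ)
    (hfi : Integrable f)
    (hF : ∀ x, F x = ∫ t in Set.Iic x, f t)
    (huni : ∃ x0 : ℝ, MonotoneOn f (Set.Iic x0) ∧ AntitoneOn f (Set.Ici x0)) :
    ∀ lam > 0, excessMass F 2 lam = excessMass F 1 lam := by
  obtain ⟨x0, hmono, hanti⟩ := huni
  intro lam _
  apply csSup_eq_csSup_of_forall_exists_le
  · rintro s ⟨L, hle, hdisj, rfl⟩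
    obtain ⟨a, b, hab, hsum⟩ := exists_intervalExcess_add_le hfi hF hmono hanti lam
      (hle 0) (hle 1) (hdisj 0 1 (by decide))
    refine ⟨_, ⟨fun _ => (a, b), fun _ => hab, fun i j hij => (hij (Subsingleton.elim i j)).elim,
      rfl⟩, ?_⟩
    simpa only [Fin.sum_univ_two, Finset.univ_unique, Finset.sum_singleton, intervalExcess]
      using hsum
  · rintro s ⟨L, hle, -, rfl⟩
    refine ⟨_, ⟨![L 0, ((L 0).2, (L 0).2)], ?_, ?_, rfl⟩, ?_⟩
    · intro i
      fin_cases i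
      exacts [hle 0, le_rfl]
    · intro i j hij
      fin_cases i <;> fin_cases j <;> simp_all
    · simp

theorem stmt0 (f F : ℝ → ℝ)
    (hf0 : ∀ x, 0 ≤ f x) (hfi : Integrable f) (hf1 : ∫ x, f x = 1)
    (hF : ∀ x, F x = ∫ t in Set.Iic x, f t)
    (huni : ∃ x0 : ℝ, MonotoneOn f (Set.Iic x0) ∧ AntitoneOn f (Set.Ici x0)) :
    ∀ lam > 0, excessMass F 2 lam = excessMass F 1 lam :=
  stmt0_general f F hfi hF huni
end

section
/- For a trimodal density f with modes of heights m₁, m₂, m₃ (in spatial order) and local minima of heights v₁ (between modes 1,2) and v₂ (between modes 2,3), with E_k(λ) the excess mass functionals and Δ₃ the excess mass difference: if m₁ ≤ v₂, then for every λ > 0, E₃(λ) = E₂(λ), hence Δ₃ = 0. -/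
open MeasureTheory

noncomputable def deltaM (F : ℝ → ℝ) (m : ℕ) : ℝ :=
  sSup { d : ℝ | ∃ lam > 0, d = excessMass F m lam - excessMass F (m - 1) lam }

/-- The difference of the cdf is the integral over `Ioc`. -/
lemma st18_Fdiff (f F : ℝ → ℝ) (hfi : Integrable f)
    (hF : ∀ x, F x = ∫ t in Set.Iic x, f t) {u v : ℝ} (huv : u ≤ v) :
    F v - F u = ∫ t in Set.Ioc u v, f t := by
  rw [hF, hF, intervalIntegral.integral_Iic_sub_Iic hfi.integrableOn hfi.integrableOn,
    intervalIntegral.integral_of_le huv]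

lemma st18_Fbound (f F : ℝ → ℝ) (hf0 : ∀ x, 0 ≤ f x) (hfi : Integrable f)
    (hf1 : ∫ x, f x = 1) (hF : ∀ x, F x = ∫ t in Set.Iic x, f t)
    {u v : ℝ} (huv : u ≤ v) : F v - F u ≤ 1 := by
  rw [st18_Fdiff f F hfi hF huv, ← hf1]
  exact setIntegral_le_integral hfi (Filter.Eventually.of_forall hf0)

lemma st18_bdd (f F : ℝ → ℝ) (hf0 : ∀ x, 0 ≤ f x) (hfi : Integrable f)
    (hf1 : ∫ x, f x = 1) (hF : ∀ x, F x = ∫ t in Set.Iic x, f t)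
    (m : ℕ) (lam : ℝ) (hlam : 0 ≤ lam) :
    BddAbove { s : ℝ | ∃ L : Fin m → ℝ × ℝ, (∀ i, (L i).1 ≤ (L i).2) ∧
      (∀ i j, i ≠ j → Disjoint (Set.Ioc (L i).1 (L i).2) (Set.Ioc (L j).1 (L j).2)) ∧
      s = ∑ i, (F (L i).2 - F (L i).1 - lam * ((L i).2 - (L i).1)) } := by
  refine ⟨m, ?_⟩
  rintro s ⟨L, hle, -, rfl⟩
  calc ∑ i, (F (L i).2 - F (L i).1 - lam * ((L i).2 - (L i).1))
      ≤ ∑ _i : Fin m, (1 : ℝ) := by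
        refine Finset.sum_le_sum fun i _ => ?_
        have h1 := st18_Fbound f F hf0 hfi hf1 hF (hle i)
        have h2 : 0 ≤ lam * ((L i).2 - (L i).1) :=
          mul_nonneg hlam (sub_nonneg.2 (hle i))
        linarith
    _ = m := by simp

lemma st18_zero_mem (F : ℝ → ℝ) (m : ℕ) (lam : ℝ) :
    (0 : ℝ) ∈ { s : ℝ | ∃ L : Fin m → ℝ × ℝ, (∀ i, (L i).1 ≤ (L i).2) ∧
      (∀ i j, i ≠ j → Disjoint (Set.Ioc (L i).1 (L i).2) (Set.Ioc (L j).1 (L j).2)) ∧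
      s = ∑ i, (F (L i).2 - F (L i).1 - lam * ((L i).2 - (L i).1)) } := by
  refine ⟨fun _ => (0, 0), fun i => le_rfl, fun i j _ => by simp, ?_⟩
  simp

/-- If an interval has positive excess, f exceeds lam somewhere inside. -/
lemma st18_ex_gt (f F : ℝ → ℝ) (hfi : Integrable f)
    (hF : ∀ x, F x = ∫ t in Set.Iic x, f t) {u v lam : ℝ} (huv : u ≤ v)
    (hpos : 0 < F v - F u - lam * (v - u)) :
    ∃ x ∈ Set.Ioo u v, lam < f x := by
  by_contra h
  push_neg at h
  have hint : F v - F u ≤ lam * (v - u) := by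
    rw [st18_Fdiff f F hfi hF huv]
    calc ∫ t in Set.Ioc u v, f t = ∫ t in Set.Ioo u v, f t :=
          integral_Ioc_eq_integral_Ioo
      _ ≤ ∫ _t in Set.Ioo u v, lam := by
          refine setIntegral_mono_on hfi.integrableOn ?_ measurableSet_Ioo
            fun x hx => h x hx
          exact integrableOn_const measure_Ioo_lt_top.ne (by simp)
      _ = lam * (v - u) := by
          rw [setIntegral_const]
          simp [Real.volume_Ioo, ENNReal.toReal_ofReal (sub_nonneg.2 huv), mul_comm]
          exact Or.inl huv
  linarith

/-- If an interval has negative excess, f is below lam somewhere on it. -/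
lemma st18_ex_lt (f F : ℝ → ℝ) (hfi : Integrable f)
    (hF : ∀ x, F x = ∫ t in Set.Iic x, f t) {u v lam : ℝ} (huv : u ≤ v)
    (hneg : F v - F u - lam * (v - u) < 0) :
    ∃ x ∈ Set.Icc u v, f x < lam := by
  by_contra h
  push_neg at h
  have hint : lam * (v - u) ≤ F v - F u := by
    rw [st18_Fdiff f F hfi hF huv]
    calc lam * (v - u) = ∫ _t in Set.Ioc u v, lam := by
          rw [setIntegral_const]
          simp [Real.volume_Ioc, ENNReal.toReal_ofReal (sub_nonneg.2 huv), mul_comm]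
          exact Or.inl huv
      _ ≤ ∫ t in Set.Ioc u v, f t := by
          refine setIntegral_mono_on ?_ hfi.integrableOn measurableSet_Ioc
            fun x hx => h x ⟨le_of_lt hx.1, hx.2⟩
          exact integrableOn_const measure_Ioc_lt_top.ne (by simp)
  linarith

/-- A pair of disjoint intervals realizes its excess in `excessMass F 2 lam`. -/
lemma st18_pair (f F : ℝ → ℝ) (hf0 : ∀ x, 0 ≤ f x) (hfi : Integrable f)
    (hf1 : ∫ x, f x = 1) (hF : ∀ x, F x = ∫ t in Set.Iic x, f t)
    (lam : ℝ) (hlam : 0 ≤ lam) (p₁ q₁ p₂ q₂ : ℝ)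
    (h₁ : p₁ ≤ q₁) (h₂ : p₂ ≤ q₂)
    (hd : Disjoint (Set.Ioc p₁ q₁) (Set.Ioc p₂ q₂)) :
    (F q₁ - F p₁ - lam * (q₁ - p₁)) + (F q₂ - F p₂ - lam * (q₂ - p₂)) ≤
      excessMass F 2 lam := by
  apply le_csSup (st18_bdd f F hf0 hfi hf1 hF 2 lam hlam)
  refine ⟨![(p₁, q₁), (p₂, q₂)], ?_, ?_, ?_⟩
  · intro i; fin_cases i <;> simpa
  · intro i j hij
    fin_cases i <;> fin_cases j <;>
      simp only [Matrix.cons_val_zero, Matrix.cons_val_one, Matrix.head_cons] at *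
    · exact absurd rfl hij
    · exact hd
    · exact hd.symm
    · exact absurd rfl hij
  · rw [Fin.sum_univ_two]
    simp

/-- The alternating pattern high-low-high-low-high is impossible for the
trimodal shape when `f a₁ ≤ f b₂`. -/
lemma st18_pattern (f : ℝ → ℝ) (a₁ b₁ a₂ b₂ a₃ : ℝ)
    (h1 : a₁ < b₁) (h2 : b₁ < a₂) (h3 : a₂ < b₂) (h4 : b₂ < a₃)
    (hm1 : MonotoneOn f (Set.Iic a₁)) (hd1 : AntitoneOn f (Set.Icc a₁ b₁))
    (hm2 : MonotoneOn f (Set.Icc b₁ a₂)) (hd2 : AntitoneOn f (Set.Icc a₂ b₂))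
    (hm3 : MonotoneOn f (Set.Icc b₂ a₃)) (hd3 : AntitoneOn f (Set.Ici a₃))
    (hlow : f a₁ ≤ f b₂) (lam x₁ y₁ x₂ y₂ x₃ : ℝ)
    (o1 : x₁ < y₁) (o2 : y₁ < x₂) (o3 : x₂ < y₂) (o4 : y₂ < x₃)
    (p1 : lam < f x₁) (q1 : f y₁ < lam) (p2 : lam < f x₂) (q2 : f y₂ < lam)
    (p3 : lam < f x₃) : False := by
  -- y₂ must be left of a₃
  have hy₂a₃ : y₂ < a₃ := by
    by_contra h
    push_neg at h
    have := hd3 h (h.trans o4.le) o4.le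
    linarith
  rcases le_or_gt b₂ y₂ with hA | hB
  · -- Case A : y₂ ∈ [b₂, a₃)
    have hfy₂ : f b₂ ≤ f y₂ := hm3 ⟨le_rfl, by linarith⟩ ⟨hA, hy₂a₃.le⟩ hA
    have hla₁ : f a₁ < lam := by linarith
    have hx₁ : b₁ < x₁ := by
      by_contra h
      push_neg at h
      rcases le_or_gt x₁ a₁ with h' | h'
      · have := hm1 h' Set.self_mem_Iic h'
        linarith
      · have := hd1 ⟨le_rfl, h1.le⟩ ⟨h'.le, h⟩ h'.le
        linarith
    have hy₁ : a₂ < y₁ := by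
      by_contra h
      push_neg at h
      have := hm2 ⟨hx₁.le, by linarith⟩ ⟨by linarith, h⟩ o1.le
      linarith
    have hx₂ : b₂ < x₂ := by
      by_contra h
      push_neg at h
      have := hd2 ⟨hy₁.le, by linarith⟩ ⟨by linarith, h⟩ o2.le
      linarith
    have := hm3 ⟨hx₂.le, by linarith⟩ ⟨hA, hy₂a₃.le⟩ o3.le
    linarith
  · -- Case B : y₂ < b₂
    have hy₁a₂ : y₁ < a₂ := by
      by_contra h
      push_neg at h
      have := hd2 ⟨h, by linarith⟩ ⟨by linarith, by linarith⟩ o2.le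
      linarith
    have ha₁y₁ : a₁ < y₁ := by
      by_contra h
      push_neg at h
      have := hm1 (o1.le.trans h) h o1.le
      linarith
    rcases le_or_gt y₂ a₂ with hB1 | hB2
    · rcases le_or_gt x₂ b₁ with hc | hc
      · have := hd1 ⟨ha₁y₁.le, by linarith⟩ ⟨by linarith, hc⟩ o2.le
        linarith
      · have := hm2 ⟨hc.le, by linarith⟩ ⟨by linarith, hB1⟩ o3.le
        linarith
    · have hfy₂ : f b₂ ≤ f y₂ := hd2 ⟨hB2.le, hB.le⟩ ⟨h3.le, le_rfl⟩ hB.le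
      have hla₁ : f a₁ < lam := by linarith
      have hx₁ : b₁ < x₁ := by
        by_contra h
        push_neg at h
        rcases le_or_gt x₁ a₁ with h' | h'
        · have := hm1 h' Set.self_mem_Iic h'
          linarith
        · have := hd1 ⟨le_rfl, h1.le⟩ ⟨h'.le, h⟩ h'.le
          linarith
      have := hm2 ⟨hx₁.le, by linarith⟩ ⟨by linarith, hy₁a₂.le⟩ o1.le
      linarith

/-- Key step: three sorted intervals can be matched by two. -/
lemma st18_key (f F : ℝ → ℝ) (hf0 : ∀ x, 0 ≤ f x) (hfi : Integrable f)
    (hf1 : ∫ x, f x = 1) (hF : ∀ x, F x = ∫ t in Set.Iic x, f t)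
    (a₁ b₁ a₂ b₂ a₃ : ℝ)
    (h1 : a₁ < b₁) (h2 : b₁ < a₂) (h3 : a₂ < b₂) (h4 : b₂ < a₃)
    (hm1 : MonotoneOn f (Set.Iic a₁)) (hd1 : AntitoneOn f (Set.Icc a₁ b₁))
    (hm2 : MonotoneOn f (Set.Icc b₁ a₂)) (hd2 : AntitoneOn f (Set.Icc a₂ b₂))
    (hm3 : MonotoneOn f (Set.Icc b₂ a₃)) (hd3 : AntitoneOn f (Set.Ici a₃))
    (hlow : f a₁ ≤ f b₂) (lam : ℝ) (hlam : 0 ≤ lam)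
    (u₀ v₀ u₁ v₁ u₂ v₂ : ℝ)
    (c0 : u₀ ≤ v₀) (c1 : v₀ ≤ u₁) (c2 : u₁ ≤ v₁) (c3 : v₁ ≤ u₂) (c4 : u₂ ≤ v₂) :
    (F v₀ - F u₀ - lam * (v₀ - u₀)) + (F v₁ - F u₁ - lam * (v₁ - u₁)) +
      (F v₂ - F u₂ - lam * (v₂ - u₂)) ≤ excessMass F 2 lam := by
  have pair := st18_pair f F hf0 hfi hf1 hF lam hlam
  have d01 : Disjoint (Set.Ioc u₀ v₀) (Set.Ioc u₁ v₁) :=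
    Set.Ioc_disjoint_Ioc.2 (le_trans (min_le_left _ _) (c1.trans (le_max_right _ _)))
  have d02 : Disjoint (Set.Ioc u₀ v₀) (Set.Ioc u₂ v₂) :=
    Set.Ioc_disjoint_Ioc.2 (le_trans (min_le_left _ _)
      ((c1.trans (c2.trans c3)).trans (le_max_right _ _)))
  have d12 : Disjoint (Set.Ioc u₁ v₁) (Set.Ioc u₂ v₂) :=
    Set.Ioc_disjoint_Ioc.2 (le_trans (min_le_left _ _) (c3.trans (le_max_right _ _)))
  set e₀ := F v₀ - F u₀ - lam * (v₀ - u₀) with he₀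
  set e₁ := F v₁ - F u₁ - lam * (v₁ - u₁) with he₁
  set e₂ := F v₂ - F u₂ - lam * (v₂ - u₂) with he₂
  rcases le_or_gt e₀ 0 with h | hp0
  · have := pair u₁ v₁ u₂ v₂ c2 c4 d12; linarith
  rcases le_or_gt e₁ 0 with h | hp1
  · have := pair u₀ v₀ u₂ v₂ c0 c4 d02; linarith
  rcases le_or_gt e₂ 0 with h | hp2
  · have := pair u₀ v₀ u₁ v₁ c0 c2 d01; linarith
  rcases le_or_gt 0 (F u₁ - F v₀ - lam * (u₁ - v₀)) with hg | hg1
  · have hmerge := pair u₀ v₁ u₂ v₂ (c0.trans (c1.trans c2)) c4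
      (Set.Ioc_disjoint_Ioc.2 (le_trans (min_le_left _ _) (c3.trans (le_max_right _ _))))
    have heq : F v₁ - F u₀ - lam * (v₁ - u₀) =
        e₀ + (F u₁ - F v₀ - lam * (u₁ - v₀)) + e₁ := by
      rw [he₀, he₁]; ring
    linarith
  rcases le_or_gt 0 (F u₂ - F v₁ - lam * (u₂ - v₁)) with hg | hg2
  · have hmerge := pair u₀ v₀ u₁ v₂ c0 (c2.trans (c3.trans c4))
      (Set.Ioc_disjoint_Ioc.2 (le_trans (min_le_left _ _) (c1.trans (le_max_right _ _))))
    have heq : F v₂ - F u₁ - lam * (v₂ - u₁) =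
        e₁ + (F u₂ - F v₁ - lam * (u₂ - v₁)) + e₂ := by
      rw [he₁, he₂]; ring
    linarith
  -- both gaps negative and all intervals positive: impossible
  exfalso
  obtain ⟨x₁, hx₁m, hx₁⟩ := st18_ex_gt f F hfi hF c0 hp0
  obtain ⟨x₂, hx₂m, hx₂⟩ := st18_ex_gt f F hfi hF c2 hp1
  obtain ⟨x₃, hx₃m, hx₃⟩ := st18_ex_gt f F hfi hF c4 hp2
  obtain ⟨y₁, hy₁m, hy₁⟩ := st18_ex_lt f F hfi hF c1 hg1
  obtain ⟨y₂, hy₂m, hy₂⟩ := st18_ex_lt f F hfi hF c3 hg2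
  exact st18_pattern f a₁ b₁ a₂ b₂ a₃ h1 h2 h3 h4 hm1 hd1 hm2 hd2 hm3 hd3 hlow
    lam x₁ y₁ x₂ y₂ x₃
    (lt_of_lt_of_le hx₁m.2 hy₁m.1) (lt_of_le_of_lt hy₁m.2 hx₂m.1)
    (lt_of_lt_of_le hx₂m.2 hy₂m.1) (lt_of_le_of_lt hy₂m.2 hx₃m.1)
    hx₁ hy₁ hx₂ hy₂ hx₃

theorem stmt18 (f F : ℝ → ℝ) (hf0 : ∀ x, 0 ≤ f x) (hfi : Integrable f)
    (hf1 : ∫ x, f x = 1) (hF : ∀ x, F x = ∫ t in Set.Iic x, f t)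
    (hcont : Continuous f)
    (a₁ b₁ a₂ b₂ a₃ : ℝ)
    (h1 : a₁ < b₁) (h2 : b₁ < a₂) (h3 : a₂ < b₂) (h4 : b₂ < a₃)
    (hm1 : MonotoneOn f (Set.Iic a₁)) (hd1 : AntitoneOn f (Set.Icc a₁ b₁))
    (hm2 : MonotoneOn f (Set.Icc b₁ a₂)) (hd2 : AntitoneOn f (Set.Icc a₂ b₂))
    (hm3 : MonotoneOn f (Set.Icc b₂ a₃)) (hd3 : AntitoneOn f (Set.Ici a₃))
    (hlow : f a₁ ≤ f b₂) :
    (∀ lam > 0, excessMass F 3 lam = excessMass F 2 lam) ∧ deltaM F 3 = 0 := by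
  have main : ∀ lam > 0, excessMass F 3 lam = excessMass F 2 lam := by
    intro lam hlam
    have hlam' : (0:ℝ) ≤ lam := hlam.le
    apply le_antisymm
    · -- E₃ ≤ E₂
      rw [excessMass]
      apply csSup_le ⟨0, st18_zero_mem F 3 lam⟩
      rintro s ⟨L, hle, hdisj, rfl⟩
      rw [Fin.sum_univ_three]
      set u₀ := (L 0).1; set v₀ := (L 0).2
      set u₁ := (L 1).1; set v₁ := (L 1).2
      set u₂ := (L 2).1; set v₂ := (L 2).2
      have pair := st18_pair f F hf0 hfi hf1 hF lam hlam'
      -- handle degenerate intervals by dropping them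
      rcases eq_or_lt_of_le (hle 0) with h0 | h0
      · have := pair u₁ v₁ u₂ v₂ (hle 1) (hle 2) (hdisj 1 2 (by decide))
        have h0' : F v₀ - F u₀ - lam * (v₀ - u₀) = 0 := by
          have e : u₀ = v₀ := h0
          rw [e]; ring
        linarith
      rcases eq_or_lt_of_le (hle 1) with hh1 | hh1
      · have := pair u₀ v₀ u₂ v₂ (hle 0) (hle 2) (hdisj 0 2 (by decide))
        have h1' : F v₁ - F u₁ - lam * (v₁ - u₁) = 0 := by
          have e : u₁ = v₁ := hh1
          rw [e]; ring
        linarith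
      rcases eq_or_lt_of_le (hle 2) with hh2 | hh2
      · have := pair u₀ v₀ u₁ v₁ (hle 0) (hle 1) (hdisj 0 1 (by decide))
        have h2' : F v₂ - F u₂ - lam * (v₂ - u₂) = 0 := by
          have e : u₂ = v₂ := hh2
          rw [e]; ring
        linarith
      -- all intervals nondegenerate: they are totally ordered
      have tot : ∀ i j : Fin 3, i ≠ j → (L i).1 < (L i).2 → (L j).1 < (L j).2 →
          (L i).2 ≤ (L j).1 ∨ (L j).2 ≤ (L i).1 := by
        intro i j hij hi hj
        by_contra h
        push_neg at h
        have hd := Set.Ioc_disjoint_Ioc.1 (hdisj i j hij)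
        have : max (L i).1 (L j).1 < min (L i).2 (L j).2 :=
          max_lt (lt_min hi h.2) (lt_min h.1 hj)
        rcases le_total (L i).2 (L j).2 with hc | hc <;>
          rcases le_total (L i).1 (L j).1 with hc' | hc' <;>
          simp [min_eq_left, min_eq_right, max_eq_left, max_eq_right, hc, hc'] at hd this <;>
          linarith
      have key := st18_key f F hf0 hfi hf1 hF a₁ b₁ a₂ b₂ a₃ h1 h2 h3 h4
        hm1 hd1 hm2 hd2 hm3 hd3 hlow lam hlam'
      rcases tot 0 1 (by decide) h0 hh1 with o01 | o10 <;>
        rcases tot 0 2 (by decide) h0 hh2 with o02 | o20 <;>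
        rcases tot 1 2 (by decide) hh1 hh2 with o12 | o21
      · have := key u₀ v₀ u₁ v₁ u₂ v₂ h0.le o01 hh1.le o12 hh2.le; linarith
      · have := key u₀ v₀ u₂ v₂ u₁ v₁ h0.le o02 hh2.le o21 hh1.le; linarith
      · exfalso; linarith [hle 0, hle 1, hle 2]
      · have := key u₂ v₂ u₀ v₀ u₁ v₁ hh2.le o20 h0.le o01 hh1.le; linarith
      · have := key u₁ v₁ u₀ v₀ u₂ v₂ hh1.le o10 h0.le o02 hh2.le; linarith
      · exfalso; linarith [hle 0, hle 1, hle 2]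
      · have := key u₁ v₁ u₂ v₂ u₀ v₀ hh1.le o12 hh2.le o20 h0.le; linarith
      · have := key u₂ v₂ u₁ v₁ u₀ v₀ hh2.le o21 hh1.le o10 h0.le; linarith
    · -- E₂ ≤ E₃
      rw [excessMass, excessMass]
      apply csSup_le ⟨0, st18_zero_mem F 2 lam⟩
      rintro s ⟨L, hle, hdisj, rfl⟩
      apply le_csSup (st18_bdd f F hf0 hfi hf1 hF 3 lam hlam')
      refine ⟨![L 0, L 1, ((L 0).1, (L 0).1)], ?_, ?_, ?_⟩
      · intro i
        fin_cases i <;>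
          simp only [Matrix.cons_val_zero, Matrix.cons_val_one, Matrix.head_cons,
            Matrix.cons_val_two, Matrix.tail_cons]
        · exact hle 0
        · exact hle 1
        · exact le_rfl
      · intro i j hij
        fin_cases i <;> fin_cases j <;>
          simp only [Matrix.cons_val_zero, Matrix.cons_val_one, Matrix.head_cons,
            Matrix.cons_val_two, Matrix.tail_cons] at *
        · exact absurd rfl hij
        · exact hdisj 0 1 (by decide)
        · simp
        · exact (hdisj 0 1 (by decide)).symm
        · exact absurd rfl hij
        · simp
        · simp
        · simp
        · exact absurd rfl hij
      · rw [Fin.sum_univ_three, Fin.sum_univ_two]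
        simp only [Matrix.cons_val_zero, Matrix.cons_val_one, Matrix.head_cons,
          Matrix.cons_val_two, Matrix.tail_cons]
        ring
  refine ⟨main, ?_⟩
  have hset : { d : ℝ | ∃ lam > 0, d = excessMass F 3 lam - excessMass F (3 - 1) lam } =
      {0} := by
    ext d
    simp only [Set.mem_setOf_eq, Set.mem_singleton_iff]
    constructor
    · rintro ⟨lam, hl, rfl⟩
      rw [show (3:ℕ) - 1 = 2 from rfl, main lam hl]
      ring
    · rintro rfl
      exact ⟨1, one_pos, by rw [show (3:ℕ) - 1 = 2 from rfl, main 1 one_pos]; ring⟩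
  rw [deltaM, hset, csSup_singleton]
end

section
/- Mode count of the Gaussian kernel estimator is at most n: for any data X₁,…,Xₙ and bandwidth h > 0, the Gaussian kernel density estimator f̂(x) = (nh)⁻¹ Σᵢ K((x−Xᵢ)/h) has at most n local maxima. -/
/-!
The derivative of a mixture of `n` Gaussians with a common variance is `e^{-κx²}` times an
exponential polynomial `∑ p_b(x) e^{bx}` with at most `n` distinct frequencies `b` and linear
coefficients `p_b`. Such a function has fewer than `∑ (deg p_b + 1) ≤ 2n` zeros: dividing by one
exponential and differentiating lowers the total weight by one, and Rolle's theorem loses at most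
one zero per step. Hence the mixture has at most `2n - 1` critical points, and since two local
maxima are always separated by a critical point that is not a local maximum (the minimum on the
segment between them), it has at most `n` local maxima.
-/

open Set Real Polynomial

theorem finite_and_ncard_le_ncard_add_one_of_interlace {S T : Set ℝ} (hT : T.Finite)
    (hST : ∀ a ∈ S, ∀ b ∈ S, a < b → ∃ t ∈ Ioo a b, t ∈ T) :
    S.Finite ∧ S.ncard ≤ T.ncard + 1 := by
  have key : ∀ F : Finset ℝ, ↑F ⊆ S → F.card ≤ T.ncard + 1 := by
    intro F hF
    by_contra! hcard
    obtain ⟨G, hGF, hG⟩ := F.exists_subset_card_eq (show T.ncard + 2 ≤ F.card by omega)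
    set e := G.orderEmbOfFin hG
    have hmem (i) : e i ∈ S := hF (hGF (G.orderEmbOfFin_mem hG i))
    choose z hz hzT using fun i : Fin (T.ncard + 1) =>
      hST _ (hmem i.castSucc) _ (hmem i.succ) (e.strictMono Fin.castSucc_lt_succ)
    have hz_mono : StrictMono z := fun i j hij =>
      (hz i).2.trans <| (e.monotone (Fin.succ_le_castSucc_iff.2 hij)).trans_lt (hz j).1
    have := ncard_le_ncard (range_subset_iff.2 hzT) hT
    rw [ncard_range_of_injective hz_mono.injective, Nat.card_fin] at this
    omega
  have hS : S.Finite := not_infinite.1 fun hinf => by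
    obtain ⟨F, hFS, hF⟩ := hinf.exists_subset_card_eq (T.ncard + 2)
    have := key F hFS
    omega
  exact ⟨hS, by simpa [ncard_eq_toFinset_card S hS] using key hS.toFinset (by simp)⟩

theorem finite_and_ncard_zeros_le_of_deriv {f : ℝ → ℝ} (hf : Continuous f)
    (hZ : {x | deriv f x = 0}.Finite) :
    {x | f x = 0}.Finite ∧ {x | f x = 0}.ncard ≤ {x | deriv f x = 0}.ncard + 1 :=
  finite_and_ncard_le_ncard_add_one_of_interlace hZ fun _ ha _ hb hab =>
    exists_deriv_eq_zero hab hf.continuousOn (ha.trans hb.symm)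

theorem exists_mem_Ioo_lt_of_isLocalMax {f : ℝ → ℝ} (hZ : {x | deriv f x = 0}.Finite)
    {a b p : ℝ} (hab : a < b) (hp : p ∈ Icc a b) (hmax : IsLocalMax f p) :
    ∃ x ∈ Ioo a b, f x < f p := by
  obtain ⟨ε, hε, hball⟩ := Metric.eventually_nhds_iff.mp hmax
  by_contra! hge
  -- Otherwise `f` is constant on `(u, v)`, an interval of critical points.
  set u := max a (p - ε)
  set v := min b (p + ε)
  have huv : u < v :=
    max_lt (lt_min hab (by linarith [hp.1])) (lt_min (by linarith [hp.2]) (by linarith))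
  have hconst : ∀ x ∈ Ioo u v, f x = f p := fun x hx => by
    have hxab : x ∈ Ioo a b :=
      ⟨(le_max_left _ _).trans_lt hx.1, hx.2.trans_le (min_le_left _ _)⟩
    refine le_antisymm (hball ?_) (hge x hxab)
    rw [Real.dist_eq, abs_lt]
    constructor <;> linarith [le_max_right a (p - ε), min_le_right b (p + ε), hx.1, hx.2]
  refine (Ioo_infinite huv).mono (fun x hx => ?_) |>.not_finite hZ
  exact (Filter.eventuallyEq_of_mem (Ioo_mem_nhds hx.1 hx.2) hconst).deriv_eq.trans
    (deriv_const x _)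

theorem finite_and_two_mul_ncard_isLocalMax_le {f : ℝ → ℝ} (hf : Continuous f)
    (hZ : {x | deriv f x = 0}.Finite) :
    {x | IsLocalMax f x}.Finite ∧
      2 * {x | IsLocalMax f x}.ncard ≤ {x | deriv f x = 0}.ncard + 1 := by
  set M := {x | IsLocalMax f x}
  set Z := {x | deriv f x = 0}
  have hMZ : M ⊆ Z := fun x hx => IsLocalMax.deriv_eq_zero hx
  have hbetween : ∀ p ∈ M, ∀ q ∈ M, p < q → ∃ r ∈ Ioo p q, r ∈ Z \ M := by
    intro p hp q hq hpq
    obtain ⟨r, hr, hmin⟩ :=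
      isCompact_Icc.exists_isMinOn (nonempty_Icc.2 hpq.le) hf.continuousOn
    have hne : ∀ m ∈ Icc p q, IsLocalMax f m → m ≠ r := fun m hm hmax hmr => by
      obtain ⟨x, hx, hlt⟩ := exists_mem_Ioo_lt_of_isLocalMax hZ hpq hm hmax
      exact (hmin (Ioo_subset_Icc_self hx)).not_gt (hmr ▸ hlt)
    have hr' : r ∈ Ioo p q :=
      ⟨hr.1.lt_of_ne (hne p (left_mem_Icc.2 hpq.le) hp),
        hr.2.lt_of_ne (hne q (right_mem_Icc.2 hpq.le) hq).symm⟩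
    exact ⟨r, hr', (hmin.isLocalMin (Icc_mem_nhds hr'.1 hr'.2)).deriv_eq_zero,
      fun hmax => hne r hr hmax rfl⟩
  obtain ⟨hMfin, hMcard⟩ := finite_and_ncard_le_ncard_add_one_of_interlace hZ.sdiff hbetween
  have := ncard_sdiff_add_ncard_of_subset hMZ hZ
  exact ⟨hMfin, by omega⟩

theorem Polynomial.derivative_add_C_mul_ne_zero {R : Type*} [Semiring R] [NoZeroDivisors R]
    {p : R[X]} (hp : p ≠ 0) {c : R} (hc : c ≠ 0) : derivative p + C c * p ≠ 0 := by
  have hlt : (derivative p).degree < (C c * p).degree := by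
    rw [degree_C_mul hc]; exact degree_derivative_lt hp
  intro h0
  have := degree_add_eq_right_of_degree_lt hlt
  rw [h0, degree_zero, degree_C_mul hc] at this
  exact hp (degree_eq_bot.1 this.symm)

noncomputable def expPoly (s : Finset ℝ) (p : ℝ → ℝ[X]) (x : ℝ) : ℝ :=
  ∑ b ∈ s, (p b).eval x * exp (b * x)

theorem hasDerivAt_exp_mul_expPoly (s : Finset ℝ) (p : ℝ → ℝ[X]) (c x : ℝ) :
    HasDerivAt (fun y => exp (-c * y) * expPoly s p y)
      (exp (-c * x) * expPoly s (fun b => derivative (p b) + C (b - c) * p b) x) x := by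
  simp only [expPoly, Finset.mul_sum]
  refine HasDerivAt.fun_sum fun b _ => ?_
  have hexp (a : ℝ) : HasDerivAt (fun y => exp (a * y)) (exp (a * x) * a) x := by
    simpa using ((hasDerivAt_id x).const_mul a).exp
  refine ((hexp (-c)).fun_mul (((p b).hasDerivAt x).fun_mul (hexp b))).congr_deriv ?_
  simp only [eval_add, eval_mul, eval_C]
  ring

theorem sum_natDegree_derivative_add_C_mul_lt {s : Finset ℝ} {p : ℝ → ℝ[X]} {b₀ : ℝ}
    (hb₀ : b₀ ∈ s) :
    ∑ b ∈ s with derivative (p b) + C (b - b₀) * p b ≠ 0,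
        ((derivative (p b) + C (b - b₀) * p b).natDegree + 1) <
      ∑ b ∈ s, ((p b).natDegree + 1) := by
  rw [Finset.sum_filter]
  refine Finset.sum_lt_sum (fun b _ => ?_) ⟨b₀, hb₀, ?_⟩
  · split_ifs
    · have := natDegree_add_le (derivative (p b)) (C (b - b₀) * p b)
      have := natDegree_derivative_le (p b)
      have := natDegree_C_mul_le (b - b₀) (p b)
      omega
    · omega
  · simp only [sub_self, C_0, zero_mul, add_zero]
    split_ifs with h
    · have := natDegree_derivative_lt fun h0 => h (derivative_of_natDegree_zero h0)
      omega
    · omega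

theorem expPoly_zeros_finite_and_ncard_lt (s : Finset ℝ) (p : ℝ → ℝ[X]) (hs : s.Nonempty)
    (hp : ∀ b ∈ s, p b ≠ 0) :
    {x | expPoly s p x = 0}.Finite ∧
      {x | expPoly s p x = 0}.ncard < ∑ b ∈ s, ((p b).natDegree + 1) := by
  generalize hN : ∑ b ∈ s, ((p b).natDegree + 1) = N
  induction N using Nat.strong_induction_on generalizing s p with
  | _ N ih =>
  obtain ⟨b₀, hb₀⟩ := hs
  set q : ℝ → ℝ[X] := fun b => derivative (p b) + C (b - b₀) * p b
  set g : ℝ → ℝ := fun x => exp (-b₀ * x) * expPoly s p x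
  have hg : ∀ x, HasDerivAt g (exp (-b₀ * x) * expPoly s q x) x :=
    hasDerivAt_exp_mul_expPoly s p b₀
  have hzeros_g : {x | expPoly s p x = 0} = {x | g x = 0} := by
    ext x; simp [g, exp_ne_zero]
  have hcrit_g : {x | deriv g x = 0} = {x | expPoly s q x = 0} := by
    ext x; simp [(hg x).deriv, exp_ne_zero]
  set s' := s.filter (q · ≠ 0)
  have hq : expPoly s q = expPoly s' q := by
    funext x
    unfold expPoly
    rw [Finset.sum_filter_of_ne]
    intro b _ hb hqb
    simp [hqb] at hb
  rcases s'.eq_empty_or_nonempty with hs' | hs'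
  · -- Only the frequency `b₀` can have `q b₀ = 0`, and then `p b₀` is a nonzero constant.
    have hs_eq : s = {b₀} := by
      refine Finset.eq_singleton_iff_unique_mem.2 ⟨hb₀, fun b hb => ?_⟩
      by_contra hne
      exact Finset.filter_eq_empty_iff.1 hs' hb
        (derivative_add_C_mul_ne_zero (hp b hb) (sub_ne_zero.2 hne))
    have hder : derivative (p b₀) = 0 := by
      simpa [q] using Finset.filter_eq_empty_iff.1 hs' hb₀
    obtain ⟨a, ha⟩ := natDegree_eq_zero.1 (derivative_eq_zero.1 hder)
    have ha0 : a ≠ 0 := by rintro rfl; exact hp b₀ hb₀ (by simp [← ha])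
    have hempty : {x | expPoly s p x = 0} = ∅ := by
      ext x; simp [expPoly, hs_eq, ← ha, ha0, exp_ne_zero]
    rw [hempty, ← hN]
    exact ⟨finite_empty, by simpa using Finset.sum_pos (fun _ _ => Nat.succ_pos _) ⟨b₀, hb₀⟩⟩
  · have hlt : ∑ b ∈ s', ((q b).natDegree + 1) < N := by
      rw [← hN]; exact sum_natDegree_derivative_add_C_mul_lt hb₀
    obtain ⟨hfin, hcard⟩ := ih _ hlt s' q hs' (fun b hb => (Finset.mem_filter.1 hb).2) rfl
    rw [← hq, ← hcrit_g] at hfin hcard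
    have hg_cont : Continuous g := continuous_iff_continuousAt.2 fun x => (hg x).continuousAt
    obtain ⟨hg_fin, hg_card⟩ := finite_and_ncard_zeros_le_of_deriv hg_cont hfin
    rw [hzeros_g]
    exact ⟨hg_fin, by omega⟩

noncomputable def gaussianMixture {ι : Type*} [Fintype ι] (w μ : ι → ℝ) (κ x : ℝ) : ℝ :=
  ∑ i, w i * exp (-(κ * (x - μ i) ^ 2))

theorem hasDerivAt_gaussianMixture {ι : Type*} [Fintype ι] (w μ : ι → ℝ) (κ x : ℝ) :
    HasDerivAt (gaussianMixture w μ κ)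
      (∑ i, w i * (-(2 * κ * (x - μ i)) * exp (-(κ * (x - μ i) ^ 2)))) x := by
  unfold gaussianMixture
  refine HasDerivAt.fun_sum fun i _ => HasDerivAt.const_mul _ ?_
  refine ((((hasDerivAt_id' x).sub_const (μ i)).fun_pow 2).const_mul κ).fun_neg.exp.congr_deriv ?_
  ring

/-- Components are grouped by the frequency `2κμᵢ` of `-κ(x - μᵢ)² = -κx² + 2κμᵢx - κμᵢ²`;
`c β` collects the weights of the components of frequency `β`. -/
theorem sum_gaussian_deriv_eq_exp_mul_expPoly {ι : Type*} [Fintype ι] (w μ : ι → ℝ) (κ x : ℝ) :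
    let b : ι → ℝ := fun i => 2 * κ * μ i
    let c : ℝ → ℝ := fun β => ∑ i with b i = β, w i * exp (-(κ * μ i ^ 2))
    ∑ i, w i * (-(2 * κ * (x - μ i)) * exp (-(κ * (x - μ i) ^ 2))) =
      exp (-(κ * x ^ 2)) *
        expPoly (Finset.univ.image b) (fun β => C (-(2 * κ * c β)) * X + C (β * c β)) x := by
  intro b c
  rw [expPoly, Finset.mul_sum,
    ← Finset.sum_fiberwise_of_maps_to (fun i _ => Finset.mem_image_of_mem b (Finset.mem_univ i))]
  refine Finset.sum_congr rfl fun β _ => ?_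
  have hp : eval x (C (-(2 * κ * c β)) * X + C (β * c β)) = c β * (β - 2 * κ * x) := by
    simp only [eval_add, eval_mul, eval_C, eval_X]
    ring
  rw [hp, show exp (-(κ * x ^ 2)) * (c β * (β - 2 * κ * x) * exp (β * x)) =
    c β * (exp (-(κ * x ^ 2)) * (β - 2 * κ * x) * exp (β * x)) by ring, Finset.sum_mul]
  refine Finset.sum_congr rfl fun i hi => ?_
  obtain rfl := (Finset.mem_filter.1 hi).2
  have hexp : exp (-(κ * (x - μ i) ^ 2)) =
      exp (-(κ * μ i ^ 2)) * (exp (-(κ * x ^ 2)) * exp (b i * x)) := by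
    rw [← exp_add, ← exp_add]
    simp only [b]
    ring_nf
  rw [hexp]
  ring

theorem exists_hasDerivAt_gaussianMixture_eq_exp_mul_expPoly {ι : Type*} [Fintype ι]
    [Nonempty ι] (w μ : ι → ℝ) (hw : ∀ i, 0 < w i) {κ : ℝ} (hκ : κ ≠ 0) :
    ∃ (s : Finset ℝ) (p : ℝ → ℝ[X]), s.Nonempty ∧ (∀ β ∈ s, p β ≠ 0) ∧
      ∑ β ∈ s, ((p β).natDegree + 1) ≤ 2 * Fintype.card ι ∧
      ∀ x, HasDerivAt (gaussianMixture w μ κ) (exp (-(κ * x ^ 2)) * expPoly s p x) x := by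
  set b : ι → ℝ := fun i => 2 * κ * μ i
  set c : ℝ → ℝ := fun β => ∑ i with b i = β, w i * exp (-(κ * μ i ^ 2))
  set p : ℝ → ℝ[X] := fun β => C (-(2 * κ * c β)) * X + C (β * c β)
  refine ⟨Finset.univ.image b, p, Finset.univ_nonempty.image b, ?_, ?_, fun x => ?_⟩
  · intro β hβ hp0
    obtain ⟨i, -, rfl⟩ := Finset.mem_image.1 hβ
    have hc : 0 < c (b i) :=
      Finset.sum_pos (fun j _ => mul_pos (hw j) (exp_pos _)) ⟨i, by simp⟩
    have : (p (b i)).natDegree = 1 := natDegree_linear (by simp [hκ, hc.ne'])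
    simp [hp0] at this
  · calc ∑ β ∈ Finset.univ.image b, ((p β).natDegree + 1)
        ≤ ∑ _β ∈ Finset.univ.image b, 2 :=
          Finset.sum_le_sum fun β _ => by
            have : (p β).natDegree ≤ 1 := natDegree_linear_le
            omega
      _ = 2 * (Finset.univ.image b).card := by rw [Finset.sum_const, smul_eq_mul, mul_comm]
      _ ≤ 2 * Fintype.card ι := by gcongr; exact Finset.card_image_le
  · exact sum_gaussian_deriv_eq_exp_mul_expPoly w μ κ x ▸ hasDerivAt_gaussianMixture w μ κ x

theorem finite_and_ncard_isLocalMax_gaussianMixture_le {ι : Type*} [Fintype ι] [Nonempty ι]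
    (w μ : ι → ℝ) (hw : ∀ i, 0 < w i) {κ : ℝ} (hκ : κ ≠ 0) :
    {x | IsLocalMax (gaussianMixture w μ κ) x}.Finite ∧
      {x | IsLocalMax (gaussianMixture w μ κ) x}.ncard ≤ Fintype.card ι := by
  obtain ⟨s, p, hs, hp, hweight, hderiv⟩ :=
    exists_hasDerivAt_gaussianMixture_eq_exp_mul_expPoly w μ hw hκ
  have hcrit : {x | deriv (gaussianMixture w μ κ) x = 0} = {x | expPoly s p x = 0} := by
    ext x; simp [(hderiv x).deriv, exp_ne_zero]
  obtain ⟨hZ, hZcard⟩ := expPoly_zeros_finite_and_ncard_lt s p hs hp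
  rw [← hcrit] at hZ hZcard
  have hcont : Continuous (gaussianMixture w μ κ) :=
    continuous_iff_continuousAt.2 fun x => (hderiv x).continuousAt
  obtain ⟨hM, hMcard⟩ := finite_and_two_mul_ncard_isLocalMax_le hcont hZ
  exact ⟨hM, by omega⟩

theorem stmt19 (n : ℕ) (hn : 0 < n) (h : ℝ) (hh : 0 < h) (X : Fin n → ℝ) :
    let K : ℝ → ℝ := fun u => (Real.sqrt (2 * Real.pi))⁻¹ * Real.exp (-u ^ 2 / 2)
    let fhat : ℝ → ℝ := fun x => ((n : ℝ) * h)⁻¹ * ∑ i, K ((x - X i) / h)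
    {x : ℝ | IsLocalMax fhat x}.Finite ∧ {x : ℝ | IsLocalMax fhat x}.ncard ≤ n := by
  intro K fhat
  have : Nonempty (Fin n) := ⟨⟨0, hn⟩⟩
  have hw : 0 < ((n : ℝ) * h)⁻¹ * (√(2 * π))⁻¹ := by positivity
  have hfhat :
      fhat = gaussianMixture (fun _ => ((n : ℝ) * h)⁻¹ * (√(2 * π))⁻¹) X (2 * h ^ 2)⁻¹ := by
    funext x
    simp only [fhat, K, gaussianMixture, Finset.mul_sum]
    refine Finset.sum_congr rfl fun i _ => ?_
    field_simp
  simpa [hfhat] using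
    finite_and_ncard_isLocalMax_gaussianMixture_le _ X (fun _ => hw) (by positivity)
end
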